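/- Assume the center K := Z(H) of H is a field and that t does not fix K pointwise, and let K^+ := {a ∈ K : t(a) = a}. Then K is a quadratic extension of K^+ ([K : K^+] = 2), and for every ring homomorphism σ₀ : K^+ → ℝ the ℝ-algebra K ⊗_{K^+} ℝ (formed via σ₀) is isomorphic to ℂ; equivalently, every ℚ-algebra homomorphism φ : K → ℂ has image not contained in ℝ and satisfies φ(t(a)) = conjugate of φ(a) for all a ∈ K. -/

import Mathlib

open scoped TensorProduct

noncomputable section

/-- Complex conjugation on `ℂ` as a `ℚ`-algebra homomorphism. -/
def conjQAlg : ℂ →ₐ[ℚ] ℂ := (Complex.conjAe.restrictScalars ℚ).toAlgHom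

variable (H : Type) [Ring H] [Algebra ℚ H] [FiniteDimensional ℚ H]

/-- The conjugate-linear involution of `H_ℂ = ℂ ⊗[ℚ] H` fixing `H`. -/
def sigmaC : ℂ ⊗[ℚ] H →ₗ[ℚ] ℂ ⊗[ℚ] H :=
  (Algebra.TensorProduct.map conjQAlg (AlgHom.id ℚ H)).toLinearMap

/-- The inclusion of `H` into `H_ℂ = ℂ ⊗[ℚ] H`. -/
def inclH : H →ₐ[ℚ] ℂ ⊗[ℚ] H := Algebra.TensorProduct.includeRight

/-- The data of a polarized weight 2 Hodge structure on a finite-dimensional `ℚ`-algebra `H`,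
compatible with the ring structure:
(i) a Hodge decomposition `H_ℂ = H^{2,0} ⊕ H^{1,1} ⊕ H^{0,2}` with `σ(H^{2,0}) = H^{0,2}`,
`σ(H^{1,1}) = H^{1,1}`;
(ii) a polarization: a symmetric `ℚ`-bilinear form `B` on `H` with `ℂ`-bilinear extension `BC`
to `H_ℂ`, whose associated Hermitian pairing `h(α,β) := BC α (σ β)` makes the Hodge pieces
pairwise orthogonal and is positive definite on `H^{2,0}`, `H^{0,2}` and negative definite on
`H^{1,1}`;
(iii) the product is a morphism of Hodge structures of bidegree `(-1,-1)`:
`H^{p,q}·H^{p',q'} ⊆ H^{p+p'-1,q+q'-1}`;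
(iv) an adjunction `t`: a `ℚ`-linear involution with `t(ab) = t(b)t(a)`,
`⟨ab,c⟩ = ⟨b, t(a)c⟩` and `⟨ab,c⟩ = ⟨a, c·t(b)⟩`. -/
structure HodgeAlgebraData where
  H20 : Submodule ℂ (ℂ ⊗[ℚ] H)
  H11 : Submodule ℂ (ℂ ⊗[ℚ] H)
  H02 : Submodule ℂ (ℂ ⊗[ℚ] H)
  sup_top : H20 ⊔ H11 ⊔ H02 = ⊤
  disj1 : H20 ⊓ (H11 ⊔ H02) = ⊥
  disj2 : H11 ⊓ H02 = ⊥
  sigma_20 : ∀ x ∈ H20, sigmaC H x ∈ H02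
  sigma_02 : ∀ x ∈ H02, sigmaC H x ∈ H20
  sigma_11 : ∀ x ∈ H11, sigmaC H x ∈ H11
  B : H →ₗ[ℚ] H →ₗ[ℚ] ℚ
  B_symm : ∀ a b : H, B a b = B b a
  BC : (ℂ ⊗[ℚ] H) →ₗ[ℂ] (ℂ ⊗[ℚ] H) →ₗ[ℂ] ℂ
  BC_extends : ∀ a b : H, BC (inclH H a) (inclH H b) = (B a b : ℂ)
  BC_symm : ∀ x y, BC x y = BC y x
  BC_conj : ∀ x y, BC (sigmaC H x) (sigmaC H y) = starRingEnd ℂ (BC x y)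
  orth_20_11 : ∀ x ∈ H20, ∀ y ∈ H11, BC x (sigmaC H y) = 0
  orth_20_02 : ∀ x ∈ H20, ∀ y ∈ H02, BC x (sigmaC H y) = 0
  orth_11_02 : ∀ x ∈ H11, ∀ y ∈ H02, BC x (sigmaC H y) = 0
  pos_20 : ∀ x ∈ H20, x ≠ 0 → 0 < (BC x (sigmaC H x)).re ∧ (BC x (sigmaC H x)).im = 0
  pos_02 : ∀ x ∈ H02, x ≠ 0 → 0 < (BC x (sigmaC H x)).re ∧ (BC x (sigmaC H x)).im = 0
  neg_11 : ∀ x ∈ H11, x ≠ 0 → (BC x (sigmaC H x)).re < 0 ∧ (BC x (sigmaC H x)).im = 0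
  mul_20_20 : ∀ x ∈ H20, ∀ y ∈ H20, x * y = 0
  mul_20_11 : ∀ x ∈ H20, ∀ y ∈ H11, x * y ∈ H20
  mul_11_20 : ∀ x ∈ H11, ∀ y ∈ H20, x * y ∈ H20
  mul_11_11 : ∀ x ∈ H11, ∀ y ∈ H11, x * y ∈ H11
  mul_20_02 : ∀ x ∈ H20, ∀ y ∈ H02, x * y ∈ H11
  mul_02_20 : ∀ x ∈ H02, ∀ y ∈ H20, x * y ∈ H11
  mul_02_02 : ∀ x ∈ H02, ∀ y ∈ H02, x * y = 0
  mul_11_02 : ∀ x ∈ H11, ∀ y ∈ H02, x * y ∈ H02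
  mul_02_11 : ∀ x ∈ H02, ∀ y ∈ H11, x * y ∈ H02
  t : H →ₗ[ℚ] H
  t_invol : ∀ a : H, t (t a) = a
  t_mul : ∀ a b : H, t (a * b) = t b * t a
  adj_left : ∀ a b c : H, B (a * b) c = B b (t a * c)
  adj_right : ∀ a b c : H, B (a * b) c = B a (c * t b)

variable {H}

/-- `W := H^{2,0}·H_ℂ`, the `ℂ`-linear span of all products `x·y` with `x ∈ H^{2,0}`,
`y ∈ H_ℂ`. -/
def HodgeAlgebraData.W (D : HodgeAlgebraData H) : Submodule ℂ (ℂ ⊗[ℚ] H) := D.H20 * ⊤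

/-- `σ(W)`, the image of `W` under the conjugation `σ`, as a `ℚ`-subspace of `H_ℂ`. -/
def HodgeAlgebraData.sigmaW (D : HodgeAlgebraData H) : Submodule ℚ (ℂ ⊗[ℚ] H) :=
  (D.W.restrictScalars ℚ).map (sigmaC H)

/-- The `ℂ`-linear extension of `t` to `H_ℂ`. -/
def HodgeAlgebraData.tC (D : HodgeAlgebraData H) : ℂ ⊗[ℚ] H →ₗ[ℂ] ℂ ⊗[ℚ] H :=
  LinearMap.baseChange ℂ D.t

/-! An embedding `φ : K → ℂ` of the center cuts out a central idempotent `e` of `H_ℂ` on which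
`K` acts through `φ`. Because the product has bidegree `(-1,-1)`, a central idempotent is of type
`(1,1)`, so `h(e,e) ≠ 0`, and the adjunction `⟨a e, σ e⟩ = ⟨e, σ (t(a) e)⟩` gives
`φ(a) h(e,e) = conj φ(t a) · h(e,e)`. Thus `t` acts as complex conjugation under every embedding,
so no embedding is real; and `K` is quadratic over `K⁺` because `t` is a nontrivial involution
of a field in which `2` is invertible. -/

theorem exists_eq_add_mul_of_involutive {K : Type*} [Field K] (h2 : (2 : K) ≠ 0)
    (τ : K →+* K) (hτ : Function.Involutive τ) {a₀ : K} (ha₀ : τ a₀ ≠ a₀) :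
    ∃ x, τ x ≠ x ∧ ∀ a, ∃ b c, τ b = b ∧ τ c = c ∧ a = b + c * x := by
  set x := a₀ - τ a₀
  have hτx : τ x = -x := by simp [x, hτ a₀]
  have hx : x ≠ 0 := sub_ne_zero.mpr (Ne.symm ha₀)
  refine ⟨x, fun h => hx ?_, fun a => ⟨(a + τ a) / 2, (a - τ a) / (2 * x), ?_, ?_, ?_⟩⟩
  · have : (2 : K) * x = 0 := by linear_combination hτx - h
    exact (mul_eq_zero.mp this).resolve_left h2
  · rw [map_div₀, map_add, hτ a, map_ofNat, add_comm]
  · rw [map_div₀, map_sub, map_mul, hτx, hτ a, map_ofNat]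
    field_simp
    ring
  · field_simp
    ring

theorem IsSemisimpleRing.exists_isIdempotentElem_mul_eq_smul {L S : Type*} [Field L]
    [CommRing S] [Algebra L S] [IsSemisimpleRing S] (Φ : S →ₐ[L] L) :
    ∃ e : S, IsIdempotentElem e ∧ Φ e = 1 ∧ ∀ s, s * e = Φ s • e := by
  obtain ⟨f, hf, hker⟩ := IsSemisimpleRing.ideal_eq_span_idempotent (RingHom.ker Φ)
  have hΦf : Φ f = 0 := by
    change f ∈ RingHom.ker Φ
    rw [hker]
    exact Ideal.subset_span rfl
  refine ⟨1 - f, hf.one_sub, by simp [hΦf], fun s => ?_⟩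
  have hs : s - algebraMap L S (Φ s) ∈ Ideal.span {f} := by
    rw [← hker, RingHom.mem_ker]
    simp
  obtain ⟨r, hr⟩ := Ideal.mem_span_singleton'.mp hs
  rw [Algebra.smul_def, ← sub_eq_zero, ← sub_mul, ← hr, mul_assoc, mul_sub, mul_one, hf.eq,
    sub_self, mul_zero]

/-- `L ⊗_F K` is reduced and artinian, hence a product of fields; `e` is the unit of the factor
on which `K` acts through `φ`. -/
theorem exists_isIdempotentElem_tmul_mul_eq_smul {F K L : Type*} [Field F] [Field K] [Field L]
    [Algebra F K] [Algebra F L] [FiniteDimensional F K] [Algebra.IsSeparable F K]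
    (φ : K →ₐ[F] L) :
    ∃ e : L ⊗[F] K, IsIdempotentElem e ∧ e ≠ 0 ∧ ∀ a, (1 ⊗ₜ a) * e = φ a • e := by
  have : Algebra.FormallyUnramified F K := .of_isSeparable F K
  have : IsReduced (L ⊗[F] K) := Algebra.FormallyUnramified.isReduced_of_field L _
  have : IsArtinianRing (L ⊗[F] K) := .of_finite L _
  have := IsArtinianRing.isSemisimpleRing_of_isReduced (L ⊗[F] K)
  obtain ⟨e, he, hΦe, heig⟩ := IsSemisimpleRing.exists_isIdempotentElem_mul_eq_smul
    (Algebra.TensorProduct.lift (AlgHom.id L L) φ fun _ _ => .all _ _)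
  refine ⟨e, he, fun h => by simp [h] at hΦe, fun a => ?_⟩
  rw [heig]
  simp

theorem commute_map_center_val {R A B : Type*} [CommRing R] [CommRing A] [Ring B]
    [Algebra R A] [Algebra R B] (z : A ⊗[R] Subalgebra.center R B) (x : A ⊗[R] B) :
    Commute (Algebra.TensorProduct.map (AlgHom.id A A) (Subalgebra.center R B).val z) x := by
  induction z using TensorProduct.induction_on with
  | zero => simp
  | add u v hu hv => simpa only [map_add] using hu.add_left hv
  | tmul c z =>
    induction x using TensorProduct.induction_on with
    | zero => simp
    | add x y hx hy => exact hx.add_right hy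
    | tmul d b => exact (Commute.all c d).tmul (Subalgebra.mem_center_iff.mp z.2 b).symm

theorem eq_zero_of_graded_idempotent {R : Type*} [Ring R] {a b c : R}
    (haa : a * a = 0) (hab : a * b = b * a) (hac : a * c = c * a) (hcb : c * b = b * c)
    (h20 : a = a * b + b * a) (h11 : b = b * b + (a * c + c * a)) (h02 : c = b * c + c * b) :
    a = 0 ∧ c = 0 := by
  have k1 : a * b = a * b * b := by
    conv_lhs => rw [h11]
    simp only [mul_add, ← hac, ← mul_assoc, haa, zero_mul, add_zero]
  have k2 : a * b = a * b * b + a * b * b := by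
    conv_lhs => rw [h20, ← hab]
    rw [add_mul]
  have hab0 : a * b = 0 := k1.trans (left_eq_add.mp (k1.symm.trans k2))
  have ha0 : a = 0 := by rw [h20, ← hab, hab0, add_zero]
  have hbb : b * b = b := by
    simp only [ha0, zero_mul, mul_zero, add_zero] at h11
    exact h11.symm
  have hbc0 : b * c = 0 := by
    have k : b * c = b * c + b * c := by
      conv_lhs => rw [h02, hcb]
      rw [mul_add, ← mul_assoc, hbb]
    exact left_eq_add.mp k
  exact ⟨ha0, by rw [h02, hcb, hbc0, add_zero]⟩

section

variable {H : Type} [Ring H] [Algebra ℚ H]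

theorem sigmaC_mul (x y : ℂ ⊗[ℚ] H) : sigmaC H (x * y) = sigmaC H x * sigmaC H y :=
  map_mul (Algebra.TensorProduct.map conjQAlg (AlgHom.id ℚ H)) x y

theorem sigmaC_smul (c : ℂ) (x : ℂ ⊗[ℚ] H) :
    sigmaC H (c • x) = starRingEnd ℂ c • sigmaC H x := by
  rw [Algebra.smul_def, sigmaC_mul, Algebra.smul_def]
  rfl

theorem sigmaC_inclH (a : H) : sigmaC H (inclH H a) = inclH H a := by
  simp [sigmaC, inclH, conjQAlg]

theorem exists_isIdempotentElem_commute_inclH_mul_eq_smul [FiniteDimensional ℚ H]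
    (hK : IsField (Subring.center H)) (φ : Subring.center H →+* ℂ) :
    ∃ e : ℂ ⊗[ℚ] H, IsIdempotentElem e ∧ e ≠ 0 ∧ (∀ x, Commute e x) ∧
      ∀ a : Subring.center H, inclH H a * e = φ a • e := by
  let Z := Subalgebra.center ℚ H
  let : Field Z := (show IsField Z from hK).toField
  obtain ⟨e, he, he0, heig⟩ :=
    exists_isIdempotentElem_tmul_mul_eq_smul (show Z →+* ℂ from φ).toRatAlgHom
  let j := Algebra.TensorProduct.map (AlgHom.id ℂ ℂ) Z.val
  have hj : Function.Injective j :=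
    Module.Flat.lTensor_preserves_injective_linearMap (M := ℂ) Z.val.toLinearMap
      Subtype.val_injective
  refine ⟨j e, he.map j, (map_ne_zero_iff j hj).mpr he0, commute_map_center_val e,
    fun a => ?_⟩
  have : inclH H a = j (1 ⊗ₜ a) := rfl
  rw [this, ← map_mul, heig a, map_smul]
  rfl

end

namespace HodgeAlgebraData

variable {H : Type} [Ring H] [Algebra ℚ H] (D : HodgeAlgebraData H)

theorem t_one : D.t 1 = 1 := by
  simpa [D.t_invol] using (D.t_mul 1 (D.t 1)).symm

theorem t_mem_center {a : H} (ha : a ∈ Subring.center H) : D.t a ∈ Subring.center H := by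
  rw [Subring.mem_center_iff] at ha ⊢
  intro g
  calc g * D.t a = D.t (a * D.t g) := by rw [D.t_mul, D.t_invol]
    _ = D.t (D.t g * a) := by rw [ha]
    _ = D.t a * g := by rw [D.t_mul, D.t_invol]

def tCenter : Subring.center H →+* Subring.center H where
  toFun a := ⟨D.t a.1, D.t_mem_center a.2⟩
  map_one' := Subtype.ext D.t_one
  map_mul' a b := Subtype.ext <| (D.t_mul a.1 b.1).trans <|
    (Subring.mem_center_iff.mp (D.t_mem_center a.2) (D.t b.1))
  map_zero' := Subtype.ext (map_zero D.t)
  map_add' a b := Subtype.ext (map_add D.t a.1 b.1)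

theorem tCenter_involutive : Function.Involutive D.tCenter :=
  fun a => Subtype.ext (D.t_invol a)

theorem exists_mem_H20_mem_H11_mem_H02 (x : ℂ ⊗[ℚ] H) :
    ∃ a ∈ D.H20, ∃ b ∈ D.H11, ∃ c ∈ D.H02, x = a + b + c := by
  obtain ⟨y, hy, c, hc, rfl⟩ := Submodule.mem_sup.mp (D.sup_top ▸ Submodule.mem_top (x := x))
  obtain ⟨a, ha, b, hb, rfl⟩ := Submodule.mem_sup.mp hy
  exact ⟨a, ha, b, hb, c, hc, rfl⟩

theorem eq_of_add_add_eq {a b c a' b' c' : ℂ ⊗[ℚ] H} (ha : a ∈ D.H20) (hb : b ∈ D.H11)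
    (hc : c ∈ D.H02) (ha' : a' ∈ D.H20) (hb' : b' ∈ D.H11) (hc' : c' ∈ D.H02)
    (h : a + b + c = a' + b' + c') : a = a' ∧ b = b' ∧ c = c' := by
  have h20 : a - a' ∈ D.H20 ⊓ (D.H11 ⊔ D.H02) := by
    refine ⟨sub_mem ha ha', ?_⟩
    rw [show a - a' = (b' - b) + (c' - c) by rw [← sub_eq_zero] at h ⊢; rw [← h]; abel]
    exact add_mem (Submodule.mem_sup_left (sub_mem hb' hb))
      (Submodule.mem_sup_right (sub_mem hc' hc))
  rw [D.disj1, Submodule.mem_bot, sub_eq_zero] at h20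
  subst h20
  have h11 : b - b' ∈ D.H11 ⊓ D.H02 := by
    refine ⟨sub_mem hb hb', ?_⟩
    rw [show b - b' = c' - c by rw [← sub_eq_zero] at h ⊢; rw [← h]; abel]
    exact sub_mem hc' hc
  rw [D.disj2, Submodule.mem_bot, sub_eq_zero] at h11
  subst h11
  exact ⟨rfl, rfl, add_left_cancel h⟩

theorem mem_H11_of_isIdempotentElem {e : ℂ ⊗[ℚ] H} (he : IsIdempotentElem e)
    (hcomm : ∀ x, Commute e x) : e ∈ D.H11 := by
  obtain ⟨a, ha, b, hb, c, hc, rfl⟩ := D.exists_mem_H20_mem_H11_mem_H02 e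
  have haa := D.mul_20_20 a ha a ha
  have hcc := D.mul_02_02 c hc c hc
  obtain ⟨hab, -, hcb⟩ := D.eq_of_add_add_eq (D.mul_20_11 a ha b hb) (D.mul_11_11 b hb b hb)
    (D.mul_02_11 c hc b hb) (D.mul_11_20 b hb a ha) (D.mul_11_11 b hb b hb)
    (D.mul_11_02 b hb c hc) (by simpa only [add_mul, mul_add] using (hcomm b).eq)
  obtain ⟨-, hac, -⟩ := D.eq_of_add_add_eq (zero_mem _) (D.mul_20_02 a ha c hc)
    (D.mul_11_02 b hb c hc) (zero_mem _) (D.mul_02_20 c hc a ha) (D.mul_02_11 c hc b hb)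
    (by simpa only [add_mul, mul_add, hcc, zero_add, add_zero] using (hcomm c).eq)
  obtain ⟨h20, h11, h02⟩ := D.eq_of_add_add_eq
    (add_mem (D.mul_20_11 a ha b hb) (D.mul_11_20 b hb a ha))
    (add_mem (D.mul_11_11 b hb b hb) (add_mem (D.mul_20_02 a ha c hc) (D.mul_02_20 c hc a ha)))
    (add_mem (D.mul_11_02 b hb c hc) (D.mul_02_11 c hc b hb)) ha hb hc
    (by rw [← he.eq]; simp only [add_mul, mul_add, haa, hcc]; abel)
  obtain ⟨rfl, rfl⟩ :=
    eq_zero_of_graded_idempotent haa hab hac hcb h20.symm h11.symm h02.symm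
  simpa using hb

theorem BC_inclH_mul (a : H) (y z : ℂ ⊗[ℚ] H) :
    D.BC (inclH H a * y) z = D.BC y (inclH H (D.t a) * z) := by
  have : D.BC ∘ₗ LinearMap.mulLeft ℂ (inclH H a) =
      D.BC.compl₂ (LinearMap.mulLeft ℂ (inclH H (D.t a))) := by
    ext y z
    simp only [TensorProduct.AlgebraTensorModule.curry_apply, TensorProduct.curry_apply,
      LinearMap.coe_comp, Function.comp_apply, LinearMap.compl₂_apply, LinearMap.mulLeft_apply,
      LinearMap.coe_restrictScalars]
    change D.BC (inclH H a * inclH H y) (inclH H z) =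
      D.BC (inclH H y) (inclH H (D.t a) * inclH H z)
    rw [← map_mul, ← map_mul, D.BC_extends, D.BC_extends, D.adj_left]
  exact LinearMap.congr_fun₂ this y z

theorem eigenvalue_t_eq_conj {e : ℂ ⊗[ℚ] H} (he : e ∈ D.H11) (he0 : e ≠ 0) {a : H}
    {μ ν : ℂ} (ha : inclH H a * e = μ • e) (hta : inclH H (D.t a) * e = ν • e) :
    ν = starRingEnd ℂ μ := by
  have hh : D.BC e (sigmaC H e) ≠ 0 := fun h => by simpa [h] using (D.neg_11 e he he0).1
  have : μ * D.BC e (sigmaC H e) = starRingEnd ℂ ν * D.BC e (sigmaC H e) :=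
    calc μ * D.BC e (sigmaC H e) = D.BC (inclH H a * e) (sigmaC H e) := by
          rw [ha, map_smul, LinearMap.smul_apply, smul_eq_mul]
      _ = D.BC e (sigmaC H (inclH H (D.t a) * e)) := by
          rw [D.BC_inclH_mul, sigmaC_mul, sigmaC_inclH]
      _ = starRingEnd ℂ ν * D.BC e (sigmaC H e) := by
          rw [hta, sigmaC_smul, map_smul, smul_eq_mul]
  rw [mul_right_cancel₀ hh this, Complex.conj_conj]

theorem map_tCenter_eq_conj [FiniteDimensional ℚ H] (hK : IsField (Subring.center H))
    (φ : Subring.center H →+* ℂ) (a : Subring.center H) :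
    φ (D.tCenter a) = starRingEnd ℂ (φ a) := by
  obtain ⟨e, he, he0, hcomm, heig⟩ := exists_isIdempotentElem_commute_inclH_mul_eq_smul hK φ
  exact D.eigenvalue_t_eq_conj (D.mem_H11_of_isIdempotentElem he hcomm) he0 (heig a)
    (heig (D.tCenter a))

theorem exists_center_eq_add_mul (hK : IsField (Subring.center H))
    (hnf : ∃ a ∈ Subring.center H, D.t a ≠ a) :
    ∃ x ∈ Subring.center H, D.t x ≠ x ∧
      ∀ a ∈ Subring.center H, ∃ b c : H,
        (b ∈ Subring.center H ∧ D.t b = b) ∧ (c ∈ Subring.center H ∧ D.t c = c) ∧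
        a = b + c * x := by
  let := hK.toField
  obtain ⟨a₀, ha₀, hta₀⟩ := hnf
  have h2 : (2 : Subring.center H) ≠ 0 := by
    intro h
    have hunit := (isUnit_iff_ne_zero.mpr two_ne_zero : IsUnit (2 : ℚ)).map (algebraMap ℚ H)
    rw [map_ofNat, show (2 : H) = 0 from congrArg Subtype.val h, isUnit_zero_iff] at hunit
    exact zero_ne_one (Subtype.ext hunit : (0 : Subring.center H) = 1)
  obtain ⟨x, hx, hdecomp⟩ := exists_eq_add_mul_of_involutive h2 D.tCenter D.tCenter_involutive
    (a₀ := ⟨a₀, ha₀⟩) fun h => hta₀ (congrArg Subtype.val h)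
  refine ⟨x, x.2, fun h => hx (Subtype.ext h), fun a ha => ?_⟩
  obtain ⟨b, c, hb, hc, habc⟩ := hdecomp ⟨a, ha⟩
  exact ⟨b, c, ⟨b.2, congrArg Subtype.val hb⟩, ⟨c.2, congrArg Subtype.val hc⟩,
    congrArg Subtype.val habc⟩

end HodgeAlgebraData

/-- Assume the center `K := Z(H)` of `H` is a field and `t` does not fix `K`
pointwise, and let `K⁺ := {a ∈ K : t(a) = a}`. Then `K` is a quadratic extension of `K⁺`
(there is `x ∈ K \ K⁺` with `K = K⁺ + K⁺x`), and every (`ℚ`-algebra) homomorphism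
`φ : K → ℂ` has image not contained in `ℝ` and satisfies `φ(t(a)) = conj(φ(a))` for all
`a ∈ K`; equivalently, for every embedding of `K⁺` into `ℝ`, the induced `ℝ`-algebra
`K ⊗_{K⁺} ℝ` is isomorphic to `ℂ`. -/
theorem center_CM_of_t_nontrivial (D : HodgeAlgebraData H)
    (hK : IsField (Subring.center H))
    (hnf : ∃ a ∈ Subring.center H, D.t a ≠ a) :
    (∃ x ∈ Subring.center H, D.t x ≠ x ∧
      ∀ a ∈ Subring.center H, ∃ b c : H,
        (b ∈ Subring.center H ∧ D.t b = b) ∧ (c ∈ Subring.center H ∧ D.t c = c) ∧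
        a = b + c * x) ∧
    (∀ φ : Subring.center H →+* ℂ,
      (∃ x : Subring.center H, (φ x).im ≠ 0) ∧
      (∀ (a : Subring.center H) (hta : D.t (a : H) ∈ Subring.center H),
        φ ⟨D.t (a : H), hta⟩ = starRingEnd ℂ (φ a))) := by
  refine ⟨D.exists_center_eq_add_mul hK hnf,
    fun φ => ⟨?_, fun a _ => D.map_tCenter_eq_conj hK φ a⟩⟩
  by_contra! hreal
  obtain ⟨a₀, ha₀, hta₀⟩ := hnf
  let := hK.toField
  have hfix : D.tCenter ⟨a₀, ha₀⟩ = ⟨a₀, ha₀⟩ := φ.injective <| by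
    rw [D.map_tCenter_eq_conj hK φ, Complex.conj_eq_iff_im.mpr (hreal _)]
  exact hta₀ (congrArg Subtype.val hfix)
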